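/- arXiv:math/0411146 — 2 statements merged into one kernel-verified Lean document; each statement's English description precedes it below -/
import Mathlib

section
/- Let A be the associative algebra of differential operators on the circle, spanned by t^m ∂^r for m ∈ ℤ, r ∈ ℕ (realized as operators on Laurent polynomials ℂ[t,t^{-1}]). Define a bilinear form c on A by c(t^{m1}∂^{r1}, t^{m2}∂^{r2}) = (-1)^{r1} δ_{r1+r2, m1+m2} r1! r2! C(m1, r1+r2+1), where C(m,k) = ⟨m⟩_k / k! is the generalized binomial coefficient of the integer m. Then the vector space Â = A ⊕ ℂκ with bracket [a + λκ, b + μκ] = ab - ba + c(a,b)κ is a Lie algebra; in particular c is a 2-cocycle: c(a,b) = -c(b,a) and c([a,b],d) + c([b,d],a) + c([d,a],b) = 0 for all a, b, d ∈ A. -/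
noncomputable section

/-- Laurent polynomials `ℂ[t,t⁻¹]`. -/
abbrev Lau : Type := LaurentPolynomial ℂ

/-- The derivative `∂ = d/dt`, sending `t^n ↦ n t^{n-1}`. -/
def D : Module.End ℂ Lau :=
  (AddMonoidAlgebra.coeffLinearEquiv ℂ).symm.toLinearMap ∘ₗ
  Finsupp.lsum ℂ (fun n : ℤ => ((n : ℂ) • Finsupp.lsingle (n - 1) : ℂ →ₗ[ℂ] (ℤ →₀ ℂ))) ∘ₗ
  (AddMonoidAlgebra.coeffLinearEquiv ℂ).toLinearMap

/-- Multiplication by `t^m`. -/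
def shiftOp (m : ℤ) : Module.End ℂ Lau :=
  LinearMap.mulLeft ℂ (LaurentPolynomial.T m)

/-- The differential operator `t^m ∂^r`. -/
def T (m : ℤ) (r : ℕ) : Module.End ℂ Lau := shiftOp m * D ^ r

/-- The falling factorial `⟨a⟩_k = a(a-1)⋯(a-k+1)`. -/
def ffac (a : ℂ) : ℕ → ℂ
  | 0 => 1
  | n + 1 => ffac a n * (a - n)

/-- Generalized binomial coefficient `C(m,k) = ⟨m⟩_k / k!` of an integer `m`. -/
def binomC (m : ℤ) (k : ℕ) : ℂ := ffac (m : ℂ) k / (Nat.factorial k : ℂ)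

/-- The `W_{1+∞}` two-cocycle on the generators:
`c(t^{m1}∂^{r1}, t^{m2}∂^{r2}) = (-1)^{r1} δ_{r1+r2,m1+m2} r1! r2! C(m1, r1+r2+1)`. -/
def cocycleVal (m1 : ℤ) (r1 : ℕ) (m2 : ℤ) (r2 : ℕ) : ℂ :=
  (-1) ^ r1 * (if ((r1 : ℤ) + r2 = m1 + m2) then 1 else 0) *
    (Nat.factorial r1 : ℂ) * (Nat.factorial r2 : ℂ) * binomC m1 (r1 + r2 + 1)

/-- The algebra `A` of differential operators on the circle. -/
def Walg : Submodule ℂ (Module.End ℂ Lau) :=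
  Submodule.span ℂ {P | ∃ (m : ℤ) (r : ℕ), P = T m r}

/-!
On the basis `tⁿ` of `ℂ[t,t⁻¹]` the operator `tᵐ∂ʳ` is the weighted shift `tⁿ ↦ ⟨n⟩ᵣ tⁿ⁺ᵐ⁻ʳ`.
For weighted shifts `A : tⁿ ↦ f n tⁿ⁺ᵘ` and `B : tⁿ ↦ g n tⁿ⁻ᵘ` put
`c(A, B) = ∑_{-u ≤ n < 0} f n g (n + u)` (an oriented sum; this is `Tr([J, A] B)` for `J` the
projection onto the span of the `tⁿ` with `n ≥ 0`), and `c(A, B) = 0` when the weights do not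
cancel. On generators this is the stated cocycle: the sum is evaluated by writing
`⟨-j-1⟩ᵣ = (-1)ʳ r! C(j+r, r)` and `⟨k⟩ᵣ = r! C(k, r)` and applying a Chu–Vandermonde identity.
Products of generators expand by the Leibniz rule for falling factorials, and the cocycle
identity for weighted shifts is a reindexing of oriented interval sums together with their
additivity `∑_a^b + ∑_b^c = ∑_a^c`. Bilinearity extends everything from generators to `A`.
-/

open Finset Nat Polynomial

section Span

variable {R M N P : Type*} [CommSemiring R] [AddCommMonoid M] [Module R M]
  [AddCommMonoid N] [Module R N] [AddCommMonoid P] [Module R P]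

lemma LinearMap.apply_eq_zero_of_mem_span₂ (B : M →ₗ[R] N →ₗ[R] P) {s : Set M} {t : Set N}
    (h : ∀ x ∈ s, ∀ y ∈ t, B x y = 0) {a : M} {b : N} (ha : a ∈ Submodule.span R s)
    (hb : b ∈ Submodule.span R t) : B a b = 0 := by
  have hs : ∀ x ∈ s, B x b = 0 := fun x hx =>
    LinearMap.eqOn_span (f := B x) (g := 0) (fun y hy => h x hx y hy) hb
  exact LinearMap.eqOn_span (f := B.flip b) (g := 0) hs ha

end Span

section Jacobiator

variable {R L : Type*} [CommRing R] [LieRing L] [LieAlgebra R L]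

def jacobiator (c : L →ₗ[R] L →ₗ[R] R) (b d : L) : L →ₗ[R] R where
  toFun a := c ⁅a, b⁆ d + c ⁅b, d⁆ a + c ⁅d, a⁆ b
  map_add' a a' := by
    simp only [add_lie, lie_add, map_add, LinearMap.add_apply]
    ring
  map_smul' t a := by
    simp only [smul_lie, lie_smul, map_smul, LinearMap.smul_apply, smul_eq_mul, RingHom.id_apply]
    ring

lemma jacobiator_apply (c : L →ₗ[R] L →ₗ[R] R) (a b d : L) :
    jacobiator c b d a = c ⁅a, b⁆ d + c ⁅b, d⁆ a + c ⁅d, a⁆ b := rfl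

lemma jacobiator_rotate (c : L →ₗ[R] L →ₗ[R] R) (a b d : L) :
    jacobiator c b d a = jacobiator c d a b := by
  simp only [jacobiator_apply]
  ring

/-- The jacobiator is linear in one slot only, so the reduction to generators rotates the slots. -/
lemma jacobiator_eq_zero_of_mem_span (c : L →ₗ[R] L →ₗ[R] R) {s : Set L}
    (h : ∀ x ∈ s, ∀ y ∈ s, ∀ z ∈ s, jacobiator c y z x = 0) {a b d : L}
    (ha : a ∈ Submodule.span R s) (hb : b ∈ Submodule.span R s) (hd : d ∈ Submodule.span R s) :
    jacobiator c b d a = 0 := by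
  have h₁ : ∀ y ∈ s, ∀ z ∈ s, ∀ a ∈ Submodule.span R s, jacobiator c y z a = 0 :=
    fun y hy z hz a ha => LinearMap.eqOn_span (g := 0) (fun x hx => h x hx y hy z hz) ha
  have h₂ : ∀ z ∈ s, ∀ a ∈ Submodule.span R s, ∀ b ∈ Submodule.span R s, jacobiator c z a b = 0 :=
    fun z hz a ha b hb => LinearMap.eqOn_span (g := 0)
      (fun y hy => (jacobiator_rotate c a y z).symm.trans (h₁ y hy z hz a ha)) hb
  rw [← jacobiator_rotate c d a b]
  exact LinearMap.eqOn_span (g := 0)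
    (fun z hz => (jacobiator_rotate c b z a).symm.trans (h₂ z hz a ha b hb)) hd

end Jacobiator

lemma ffac_eq_eval (a : ℂ) (n : ℕ) : ffac a n = (descPochhammer ℂ n).eval a := by
  induction n with
  | zero => rw [ffac, descPochhammer_zero, eval_one]
  | succ n ih => rw [descPochhammer_succ_eval, ← ih, ffac]

lemma ffac_eq_smeval (a : ℂ) (n : ℕ) : ffac a n = (descPochhammer ℤ n).smeval a := by
  rw [ffac_eq_eval, ← aeval_eq_smeval, aeval_def, ← eval_map, descPochhammer_map]

lemma ffac_natCast (k r : ℕ) : ffac (k : ℂ) r = r ! * k.choose r := by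
  rw [ffac_eq_eval, descPochhammer_eval_eq_descFactorial, descFactorial_eq_factorial_mul_choose,
    Nat.cast_mul]

lemma ffac_reflect (k : ℕ) (x : ℂ) : ffac (k - 1 - x) k = (-1) ^ k * ffac x k := by
  rw [ffac_eq_eval, ffac_eq_eval, descPochhammer_eval_eq_ascPochhammer,
    ← ascPochhammer_eval_neg_eq_descPochhammer]
  ring_nf

lemma ffac_add (x : ℂ) (a b : ℕ) : ffac x (a + b) = ffac x a * ffac (x - a) b := by
  simp only [ffac_eq_eval, ← descPochhammer_mul, eval_mul, eval_comp, eval_sub, eval_X,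
    eval_natCast]

lemma ffac_add_eq_sum (x y : ℂ) (k : ℕ) :
    ffac (x + y) k = ∑ ij ∈ antidiagonal k, (k.choose ij.1 : ℂ) * (ffac x ij.1 * ffac y ij.2) := by
  simp only [ffac_eq_smeval]
  exact Ring.descPochhammer_smeval_add k (Commute.all x y)

lemma ffac_neg_natCast_sub_one (j r : ℕ) :
    ffac (-(j : ℂ) - 1) r = (-1) ^ r * r ! * (j + r).choose r := by
  have h := ffac_reflect r ((j + r : ℕ) : ℂ)
  rw [ffac_natCast, show (r : ℂ) - 1 - ((j + r : ℕ) : ℂ) = -(j : ℂ) - 1 by push_cast; ring] at h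
  rw [h, mul_assoc]

lemma ffac_mul_ffac_add_sub (x y : ℂ) (a b : ℕ) :
    ffac x a * ffac (x + (y - a)) b
      = ∑ ij ∈ antidiagonal b, (b.choose ij.1 : ℂ) * ffac y ij.1 * ffac x (a + ij.2) := by
  rw [show x + (y - a) = y + (x - a) by ring, ffac_add_eq_sum, mul_sum]
  refine sum_congr rfl fun ij _ => ?_
  rw [ffac_add]
  ring

theorem Nat.sum_range_add_choose_mul_sub_choose (p q N : ℕ) :
    ∑ j ∈ range (N + 1), (j + p).choose p * (N - j).choose q = (N + p + 1).choose (p + q + 1) := by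
  induction q generalizing N with
  | zero => simpa using sum_range_add_choose N p
  | succ q ihq =>
    induction N with
    | zero => simp [choose_eq_zero_of_lt (show p + 1 < p + (q + 1) + 1 by omega)]
    | succ N ihN =>
      have pascal : ∀ j ∈ range (N + 1), (j + p).choose p * (N + 1 - j).choose (q + 1)
          = (j + p).choose p * (N - j).choose (q + 1) + (j + p).choose p * (N - j).choose q := by
        intro j hj
        rw [show N + 1 - j = N - j + 1 by grind, choose_succ_succ', mul_add, add_comm]
      rw [sum_range_succ, Nat.sub_self, choose_zero_succ, mul_zero, add_zero,
        sum_congr rfl pascal, sum_add_distrib, ihN, ihq,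
        show N + 1 + p + 1 = N + p + 1 + 1 by omega, show p + (q + 1) + 1 = p + q + 1 + 1 by omega,
        choose_succ_succ' (N + p + 1), add_comm]

lemma sum_Ico_neg_natCast {M : Type*} [AddCommMonoid M] (F : ℤ → M) (N : ℕ) :
    ∑ n ∈ Ico (-(N : ℤ)) 0, F n = ∑ j ∈ range N, F (-(j : ℤ) - 1) :=
  sum_nbij' (fun n => (-n - 1).toNat) (fun j : ℕ => -(j : ℤ) - 1) (by simp; omega)
    (by simp; omega) (by simp; omega) (by simp) fun n hn => by
      rw [show -((-n - 1).toNat : ℤ) - 1 = n by simp at hn; omega]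

lemma sum_Ico_ffac_mul_ffac (M r₁ r₂ : ℕ) :
    ∑ n ∈ Ico (-(M : ℤ)) 0, ffac n r₁ * ffac (n + M : ℤ) r₂
      = (-1) ^ r₁ * r₁ ! * r₂ ! * (M + r₁).choose (r₁ + r₂ + 1) := by
  rcases M with _ | N
  · simp [choose_eq_zero_of_lt (show r₁ < r₁ + r₂ + 1 by omega)]
  have term : ∀ j ∈ range (N + 1), ffac (-(j : ℂ) - 1) r₁ * ffac (-(j : ℂ) - 1 + (N + 1)) r₂
      = (-1) ^ r₁ * r₁ ! * r₂ ! * ((j + r₁).choose r₁ * (N - j).choose r₂ : ℕ) := by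
    intro j hj
    rw [show -(j : ℂ) - 1 + (N + 1) = ((N - j : ℕ) : ℂ) by
        rw [Nat.cast_sub (by simpa [Nat.lt_succ_iff] using hj)]; ring,
      ffac_natCast, ffac_neg_natCast_sub_one]
    push_cast
    ring
  rw [sum_Ico_neg_natCast]
  push_cast
  rw [sum_congr rfl term, ← mul_sum, ← Nat.cast_sum, sum_range_add_choose_mul_sub_choose,
    show N + r₁ + 1 = N + 1 + r₁ by omega]

def heaviside (n : ℤ) : ℂ := if 0 ≤ n then 1 else 0

lemma support_heaviside_sub_sub_mul_subset (a b : ℤ) (F : ℤ → ℂ) :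
    Function.support (fun n => (heaviside (n - a) - heaviside (n - b)) * F n) ⊆
      Ico (min a b) (max a b) := by
  intro n hn
  contrapose! hn
  simp only [coe_Ico, Set.mem_Ico, not_and_or, not_le, not_lt] at hn
  simp only [Function.mem_support, ne_eq, not_not, heaviside]
  rcases hn with h | h
  · rw [if_neg (by omega), if_neg (by omega), sub_zero, zero_mul]
  · rw [if_pos (by omega), if_pos (by omega), sub_self, zero_mul]

lemma finite_support_heaviside_sub_sub_mul (a b : ℤ) (F : ℤ → ℂ) :
    (Function.support (fun n => (heaviside (n - a) - heaviside (n - b)) * F n)).Finite :=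
  (Ico (min a b) (max a b)).finite_toSet.subset (support_heaviside_sub_sub_mul_subset a b F)

/-- The oriented sum `∑_{a ≤ n < b} F n`, taken with the opposite sign when `b < a`. -/
def intervalSum (a b : ℤ) : (ℤ → ℂ) →ₗ[ℂ] ℂ where
  toFun F := ∑ᶠ n, (heaviside (n - a) - heaviside (n - b)) * F n
  map_add' F G := by
    simp only [Pi.add_apply, mul_add]
    exact finsum_add_distrib (finite_support_heaviside_sub_sub_mul a b F)
      (finite_support_heaviside_sub_sub_mul a b G)
  map_smul' t F := by
    simp only [Pi.smul_apply, smul_eq_mul, RingHom.id_apply, mul_left_comm _ t]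
    exact (mul_finsum _ _).symm

lemma intervalSum_apply (a b : ℤ) (F : ℤ → ℂ) :
    intervalSum a b F = ∑ᶠ n, (heaviside (n - a) - heaviside (n - b)) * F n := rfl

lemma intervalSum_of_le {a b : ℤ} (h : a ≤ b) (F : ℤ → ℂ) :
    intervalSum a b F = ∑ n ∈ Ico a b, F n := by
  have hsupp := support_heaviside_sub_sub_mul_subset a b F
  rw [min_eq_left h, max_eq_right h] at hsupp
  rw [intervalSum_apply, finsum_eq_sum_of_support_subset _ hsupp]
  refine sum_congr rfl fun n hn => ?_
  rw [mem_Ico] at hn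
  rw [heaviside, heaviside, if_pos (by omega), if_neg (by omega), sub_zero, one_mul]

lemma intervalSum_add_intervalSum (a b c : ℤ) (F : ℤ → ℂ) :
    intervalSum a b F + intervalSum b c F = intervalSum a c F := by
  simp only [intervalSum_apply]
  rw [← finsum_add_distrib (finite_support_heaviside_sub_sub_mul a b F)
    (finite_support_heaviside_sub_sub_mul b c F)]
  exact finsum_congr fun n => by ring

lemma intervalSum_swap (a b : ℤ) (F : ℤ → ℂ) : intervalSum b a F = - intervalSum a b F := by
  have h := intervalSum_add_intervalSum a b a F
  rw [intervalSum_of_le le_rfl, Ico_self, sum_empty] at h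
  linear_combination h

lemma intervalSum_comp_add_right (a b d : ℤ) (F : ℤ → ℂ) :
    intervalSum a b (fun n => F (n + d)) = intervalSum (a + d) (b + d) F := by
  simp only [intervalSum_apply]
  rw [← finsum_comp_equiv (Equiv.addRight d) (f := fun n => _ * F n)]
  exact finsum_congr fun n => by simp only [Equiv.coe_addRight, add_sub_add_right_eq_sub]

lemma intervalSum_comp_add_right_of_eq {a b d a' b' : ℤ} (ha : a + d = a') (hb : b + d = b')
    (F : ℤ → ℂ) : intervalSum a b (fun n => F (n + d)) = intervalSum a' b' F := by
  rw [intervalSum_comp_add_right, ha, hb]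

/-- The value of the cocycle on the pair of operators `tⁿ ↦ f n • tⁿ⁺ᵘ` and `tⁿ ↦ g n • tⁿ⁺ᵛ`. -/
def shiftCocycle (u : ℤ) (f : ℤ → ℂ) (v : ℤ) (g : ℤ → ℂ) : ℂ :=
  if u + v = 0 then intervalSum (-u) 0 (f * fun n => g (n + u)) else 0

/-- The coefficient function of the commutator of `tⁿ ↦ f n • tⁿ⁺ᵘ` and `tⁿ ↦ g n • tⁿ⁺ᵛ`. -/
def shiftBracket (u : ℤ) (f : ℤ → ℂ) (v : ℤ) (g : ℤ → ℂ) : ℤ → ℂ :=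
  fun n => f (n + v) * g n - g (n + u) * f n

lemma shiftCocycle_swap (u v : ℤ) (f g : ℤ → ℂ) :
    shiftCocycle v g u f = - shiftCocycle u f v g := by
  unfold shiftCocycle
  by_cases h : u + v = 0
  · obtain rfl : v = -u := by omega
    rw [if_pos (neg_add_cancel u), if_pos (add_neg_cancel u), neg_neg]
    calc intervalSum u 0 (g * fun n => f (n + -u))
        = intervalSum u 0 (fun n => (f * fun n => g (n + u)) (n + -u)) := by
          congr 1
          funext n
          simp only [Pi.mul_apply, neg_add_cancel_right, mul_comm]
      _ = intervalSum 0 (-u) (f * fun n => g (n + u)) :=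
          intervalSum_comp_add_right_of_eq (by ring) (by ring) _
      _ = _ := intervalSum_swap _ _ _
  · rw [if_neg (by omega), if_neg h, neg_zero]

lemma shiftCocycle_sub_left (u v : ℤ) (f f' g : ℤ → ℂ) :
    shiftCocycle u (f - f') v g = shiftCocycle u f v g - shiftCocycle u f' v g := by
  unfold shiftCocycle
  split_ifs
  · rw [sub_mul, map_sub]
  · rw [sub_zero]

lemma shiftCocycle_sum_smul_left {ι : Type*} (s : Finset ι) (u v : ℤ) (a : ι → ℂ)
    (f : ι → ℤ → ℂ) (g : ℤ → ℂ) :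
    shiftCocycle u (∑ i ∈ s, a i • f i) v g = ∑ i ∈ s, a i * shiftCocycle u (f i) v g := by
  unfold shiftCocycle
  split_ifs
  · simp only [sum_mul, smul_mul_assoc, map_sum, map_smul, smul_eq_mul]
  · simp only [mul_zero, sum_const_zero]

lemma shiftCocycle_natCast_neg (M : ℕ) (f g : ℤ → ℂ) :
    shiftCocycle M f (-M) g = ∑ n ∈ Ico (-(M : ℤ)) 0, f n * g (n + M) := by
  rw [shiftCocycle, if_pos (add_neg_cancel _), intervalSum_of_le (by omega)]
  rfl

lemma shiftCocycle_jacobi (u v w : ℤ) (f g h : ℤ → ℂ) :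
    shiftCocycle (u + v) (shiftBracket u f v g) w h
      + shiftCocycle (v + w) (shiftBracket v g w h) u f
      + shiftCocycle (w + u) (shiftBracket w h u f) v g = 0 := by
  by_cases huvw : u + v + w = 0
  swap
  · simp only [shiftCocycle]
    rw [if_neg huvw, if_neg (by omega), if_neg (by omega), add_zero, add_zero]
  obtain rfl : w = -(u + v) := by omega
  -- every term is an interval sum of one of the two cyclic products `P`, `Q`
  set P : ℤ → ℂ := fun n => f n * g (n + u) * h (n + u + v)
  set Q : ℤ → ℂ := fun n => g n * f (n + v) * h (n + u + v)
  have h₁ : shiftCocycle (u + v) (shiftBracket u f v g) (-(u + v)) h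
      = intervalSum (-(u + v)) 0 Q - intervalSum (-(u + v)) 0 P := by
    rw [shiftCocycle, if_pos (add_neg_cancel _), ← map_sub]
    congr 1
    funext n
    simp only [shiftBracket, P, Q, Pi.mul_apply, Pi.sub_apply]
    ring_nf
  have h₂ : shiftCocycle (v + -(u + v)) (shiftBracket v g (-(u + v)) h) u f
      = intervalSum (-v) (-(u + v)) Q - intervalSum 0 (-u) P := by
    rw [← intervalSum_comp_add_right_of_eq (a := u) (b := 0) (d := -(u + v)) (F := Q)
        (by ring) (by ring),
      ← intervalSum_comp_add_right_of_eq (a := u) (b := 0) (d := -u) (F := P) (by ring) (by ring),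
      shiftCocycle, if_pos (by ring), ← map_sub, show -(v + -(u + v)) = u by ring]
    congr 1
    funext n
    simp only [shiftBracket, P, Q, Pi.mul_apply, Pi.sub_apply]
    ring_nf
  have h₃ : shiftCocycle (-(u + v) + u) (shiftBracket (-(u + v)) h u f) v g
      = intervalSum 0 (-v) Q - intervalSum (-u) (-(u + v)) P := by
    rw [← intervalSum_comp_add_right_of_eq (a := v) (b := 0) (d := -v) (F := Q) (by ring) (by ring),
      ← intervalSum_comp_add_right_of_eq (a := v) (b := 0) (d := -(u + v)) (F := P)
        (by ring) (by ring),
      shiftCocycle, if_pos (by ring), ← map_sub, show -(-(u + v) + u) = v by ring]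
    congr 1
    funext n
    simp only [shiftBracket, P, Q, Pi.mul_apply, Pi.sub_apply]
    ring_nf
  have hQ := intervalSum_add_intervalSum (-v) (-(u + v)) 0 Q
  have hP := intervalSum_add_intervalSum 0 (-u) (-(u + v)) P
  have hsQ := intervalSum_swap (-v) 0 Q
  have hsP := intervalSum_swap (-(u + v)) 0 P
  rw [h₁, h₂, h₃]
  linear_combination hQ + hsQ - hP - hsP

def ffacInt (r : ℕ) (n : ℤ) : ℂ := ffac n r

lemma cocycleVal_swap (m₁ : ℤ) (r₁ : ℕ) (m₂ : ℤ) (r₂ : ℕ) :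
    cocycleVal m₂ r₂ m₁ r₁ = - cocycleVal m₁ r₁ m₂ r₂ := by
  unfold cocycleVal binomC
  by_cases h : (r₁ : ℤ) + r₂ = m₁ + m₂
  · rw [if_pos (by omega), if_pos h, show r₂ + r₁ + 1 = r₁ + r₂ + 1 by ring,
      show (m₂ : ℂ) = ((r₁ + r₂ + 1 : ℕ) : ℂ) - 1 - m₁ by
        rw [show m₂ = r₁ + r₂ - m₁ by omega]; push_cast; ring,
      ffac_reflect]
    have hsq : ((-1 : ℂ) ^ r₂) ^ 2 = 1 := by rw [← pow_mul, pow_mul', neg_one_sq, one_pow]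
    rw [pow_add, pow_add, pow_one]
    linear_combination (-(-1) ^ r₁ * r₁ ! * r₂ ! * (ffac m₁ (r₁ + r₂ + 1) / (r₁ + r₂ + 1)!)) * hsq
  · rw [if_neg (by omega), if_neg h]
    ring

lemma cocycleVal_eq_shiftCocycle (m₁ : ℤ) (r₁ : ℕ) (m₂ : ℤ) (r₂ : ℕ) :
    cocycleVal m₁ r₁ m₂ r₂ = shiftCocycle (m₁ - r₁) (ffacInt r₁) (m₂ - r₂) (ffacInt r₂) := by
  wlog hw : 0 ≤ m₁ - r₁ generalizing m₁ r₁ m₂ r₂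
  · by_cases h : (m₁ - r₁) + (m₂ - r₂) = 0
    · rw [← neg_neg (cocycleVal _ _ _ _), ← cocycleVal_swap, this m₂ r₂ m₁ r₁ (by omega),
        shiftCocycle_swap, neg_neg]
    · rw [cocycleVal, shiftCocycle, if_neg h, if_neg (by omega)]
      ring
  obtain ⟨M, hM⟩ : ∃ M : ℕ, m₁ = M + r₁ := ⟨(m₁ - r₁).toNat, by omega⟩
  subst hM
  by_cases h : (r₁ : ℤ) + r₂ = M + r₁ + m₂
  · rw [show (M : ℤ) + r₁ - r₁ = M by ring, show m₂ - r₂ = -M by omega,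
      shiftCocycle_natCast_neg]
    simp only [ffacInt, sum_Ico_ffac_mul_ffac, cocycleVal, binomC, if_pos h]
    rw [show ((M + r₁ : ℤ) : ℂ) = ((M + r₁ : ℕ) : ℂ) by push_cast; ring, ffac_natCast]
    have : ((r₁ + r₂ + 1)! : ℂ) ≠ 0 := Nat.cast_ne_zero.mpr (factorial_ne_zero _)
    field_simp
  · rw [cocycleVal, shiftCocycle, if_neg h, if_neg (by omega)]
    ring

lemma D_apply_T (n : ℤ) : D (LaurentPolynomial.T n) = (n : ℂ) • LaurentPolynomial.T (n - 1) := by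
  change (AddMonoidAlgebra.coeffLinearEquiv ℂ).symm
    (Finsupp.lsum ℂ (fun n : ℤ => ((n : ℂ) • Finsupp.lsingle (n - 1) : ℂ →ₗ[ℂ] (ℤ →₀ ℂ)))
      (Finsupp.single n 1)) = _
  rw [Finsupp.lsum_single, LinearMap.smul_apply, Finsupp.lsingle_apply, map_smul]
  rfl

lemma D_pow_apply_T (r : ℕ) (n : ℤ) :
    (D ^ r) (LaurentPolynomial.T n) = ffac n r • LaurentPolynomial.T (n - r) := by
  induction r with
  | zero => rw [pow_zero, Module.End.one_apply, ffac, one_smul, Nat.cast_zero, sub_zero]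
  | succ r ih =>
    rw [_root_.pow_succ', Module.End.mul_apply, ih, map_smul, D_apply_T, smul_smul, ffac,
      Int.cast_sub, Int.cast_natCast, Nat.cast_succ, sub_sub]

lemma T_apply_T (m : ℤ) (r : ℕ) (n : ℤ) :
    T m r (LaurentPolynomial.T n) = ffac n r • LaurentPolynomial.T (n + (m - r)) := by
  rw [T, Module.End.mul_apply, D_pow_apply_T, shiftOp, map_smul, LinearMap.mulLeft_apply,
    ← LaurentPolynomial.T_add]
  ring_nf

lemma Module.End.ext_T {f g : Module.End ℂ Lau}
    (h : ∀ n, f (LaurentPolynomial.T n) = g (LaurentPolynomial.T n)) : f = g :=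
  (AddMonoidAlgebra.basis ℤ ℂ).ext h

lemma T_mul_T (m₁ : ℤ) (r₁ : ℕ) (m₂ : ℤ) (r₂ : ℕ) :
    T m₁ r₁ * T m₂ r₂ = ∑ ij ∈ antidiagonal r₁,
      ((r₁.choose ij.1 : ℂ) * ffac m₂ ij.1) • T (m₁ + m₂ - ij.1) (r₂ + ij.2) := by
  refine Module.End.ext_T fun n => ?_
  have weight : ∀ ij ∈ antidiagonal r₁,
      n + (m₁ + m₂ - ij.1 - (r₂ + ij.2 : ℕ)) = n + (m₂ - r₂) + (m₁ - r₁) := by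
    intro ij hij
    rw [HasAntidiagonal.mem_antidiagonal] at hij
    omega
  simp only [Module.End.mul_apply, LinearMap.sum_apply, LinearMap.smul_apply,
    T_apply_T, map_smul, smul_smul]
  rw [sum_congr rfl fun ij hij => by rw [weight ij hij], ← sum_smul]
  congr 1
  rw [Int.cast_add, Int.cast_sub, Int.cast_natCast, ffac_mul_ffac_add_sub]

lemma mul_mem_Walg {a b : Module.End ℂ Lau} (ha : a ∈ Walg) (hb : b ∈ Walg) : a * b ∈ Walg := by
  suffices Walg * Walg ≤ Walg from this (Submodule.mul_mem_mul ha hb)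
  rw [Walg, Submodule.span_mul_span, Submodule.span_le]
  rintro _ ⟨_, ⟨m₁, r₁, rfl⟩, _, ⟨m₂, r₂, rfl⟩, rfl⟩
  change T m₁ r₁ * T m₂ r₂ ∈ Walg
  rw [T_mul_T]
  exact sum_mem fun ij _ => Submodule.smul_mem _ _ (Submodule.subset_span ⟨_, _, rfl⟩)

section Cocycle

variable (c : Module.End ℂ Lau →ₗ[ℂ] Module.End ℂ Lau →ₗ[ℂ] ℂ)
  (hc : ∀ (m₁ : ℤ) (r₁ : ℕ) (m₂ : ℤ) (r₂ : ℕ), c (T m₁ r₁) (T m₂ r₂) = cocycleVal m₁ r₁ m₂ r₂)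
include hc

lemma apply_T_mul_T_T (m₁ : ℤ) (r₁ : ℕ) (m₂ : ℤ) (r₂ : ℕ) (m₃ : ℤ) (r₃ : ℕ) :
    c (T m₁ r₁ * T m₂ r₂) (T m₃ r₃) = shiftCocycle ((m₁ - r₁) + (m₂ - r₂))
      (fun n => ffacInt r₁ (n + (m₂ - r₂)) * ffacInt r₂ n) (m₃ - r₃) (ffacInt r₃) := by
  have weight : ∀ ij ∈ antidiagonal r₁,
      m₁ + m₂ - ij.1 - (r₂ + ij.2 : ℕ) = (m₁ - r₁) + (m₂ - r₂) := by
    intro ij hij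
    rw [HasAntidiagonal.mem_antidiagonal] at hij
    omega
  simp only [T_mul_T, map_sum, map_smul, LinearMap.sum_apply, LinearMap.smul_apply, smul_eq_mul,
    hc, cocycleVal_eq_shiftCocycle]
  rw [sum_congr rfl fun ij hij => by rw [weight ij hij], ← shiftCocycle_sum_smul_left]
  congr 1
  funext n
  simp only [ffacInt, Finset.sum_apply, Pi.smul_apply, smul_eq_mul]
  rw [Int.cast_add, Int.cast_sub, Int.cast_natCast, mul_comm (ffac _ r₁), ffac_mul_ffac_add_sub]

lemma apply_lie_T_T (m₁ : ℤ) (r₁ : ℕ) (m₂ : ℤ) (r₂ : ℕ) (m₃ : ℤ) (r₃ : ℕ) :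
    c ⁅T m₁ r₁, T m₂ r₂⁆ (T m₃ r₃) = shiftCocycle ((m₁ - r₁) + (m₂ - r₂))
      (shiftBracket (m₁ - r₁) (ffacInt r₁) (m₂ - r₂) (ffacInt r₂)) (m₃ - r₃) (ffacInt r₃) := by
  rw [Ring.lie_def, map_sub, LinearMap.sub_apply, apply_T_mul_T_T c hc, apply_T_mul_T_T c hc,
    add_comm (m₂ - r₂), ← shiftCocycle_sub_left]
  rfl

lemma jacobi_T (m₁ : ℤ) (r₁ : ℕ) (m₂ : ℤ) (r₂ : ℕ) (m₃ : ℤ) (r₃ : ℕ) :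
    c ⁅T m₁ r₁, T m₂ r₂⁆ (T m₃ r₃) + c ⁅T m₂ r₂, T m₃ r₃⁆ (T m₁ r₁)
      + c ⁅T m₃ r₃, T m₁ r₁⁆ (T m₂ r₂) = 0 := by
  simp only [apply_lie_T_T c hc]
  exact shiftCocycle_jacobi _ _ _ _ _ _

end Cocycle

/-- The centrally extended vector space `Â = A ⊕ ℂκ` with bracket
`[a + λκ, b + μκ] = ab - ba + c(a,b)κ` is a Lie algebra; in particular `A` is closed
under the commutator and `c` is a 2-cocycle: `c(a,b) = -c(b,a)` and
`c([a,b],d) + c([b,d],a) + c([d,a],b) = 0` for all `a, b, d ∈ A`. -/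
theorem w1plusInfty_cocycle
    (c : Module.End ℂ Lau →ₗ[ℂ] Module.End ℂ Lau →ₗ[ℂ] ℂ)
    (hc : ∀ (m1 : ℤ) (r1 : ℕ) (m2 : ℤ) (r2 : ℕ),
      c (T m1 r1) (T m2 r2) = cocycleVal m1 r1 m2 r2) :
    (∀ a ∈ Walg, ∀ b ∈ Walg, ⁅a, b⁆ ∈ Walg) ∧
    (∀ a ∈ Walg, ∀ b ∈ Walg, c a b = - c b a) ∧
    (∀ a ∈ Walg, ∀ b ∈ Walg, ∀ d ∈ Walg,
      c ⁅a, b⁆ d + c ⁅b, d⁆ a + c ⁅d, a⁆ b = 0) := by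
  refine ⟨fun a ha b hb => ?_, fun a ha b hb => ?_, fun a ha b hb d hd => ?_⟩
  · rw [Ring.lie_def]
    exact sub_mem (mul_mem_Walg ha hb) (mul_mem_Walg hb ha)
  · refine eq_neg_of_add_eq_zero_left ((c + c.flip).apply_eq_zero_of_mem_span₂ ?_ ha hb)
    rintro _ ⟨m₁, r₁, rfl⟩ _ ⟨m₂, r₂, rfl⟩
    rw [LinearMap.add_apply, LinearMap.add_apply, LinearMap.flip_apply, hc, hc, cocycleVal_swap,
      neg_add_cancel]
  · -- `⁅a, b⁆` is the ring commutator; the Lie structure it induces is not a global instance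
    let : LieRing (Module.End ℂ Lau) := LieRing.ofAssociativeRing
    let : LieAlgebra ℂ (Module.End ℂ Lau) := LieAlgebra.ofAssociativeAlgebra
    rw [← jacobiator_apply]
    refine jacobiator_eq_zero_of_mem_span c ?_ ha hb hd
    rintro _ ⟨m₁, r₁, rfl⟩ _ ⟨m₂, r₂, rfl⟩ _ ⟨m₃, r₃, rfl⟩
    exact jacobi_T c hc m₁ r₁ m₂ r₂ m₃ r₃
end
end

section
/- Let n be a positive integer. The associative algebra M_n(ℂ) ⊗ gl(∞) is isomorphic to gl(∞), where gl(∞) denotes the algebra of matrices indexed by ℤ+1/2 with finitely many nonzero entries (product E_{l1,l2}·E_{k1,k2} = δ_{l2+k1,0} E_{l1,k2}). Explicitly, the linear map sending E_{i,j} ⊗ E_{l+1/2, k-1/2} to E_{ln+i-1/2, kn-j+1/2} for i,j ∈ {1,...,n} and l,k ∈ ℤ is an isomorphism of associative algebras. -/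
noncomputable section

open scoped TensorProduct

/-- The index set `ℤ + 1/2` of half-integers. -/
abbrev HI : Type := {q : ℚ // ∃ n : ℤ, q = (n : ℚ) + 1/2}

/-- The half-integer `n + 1/2`. -/
def hf (n : ℤ) : HI := ⟨(n : ℚ) + 1/2, ⟨n, rfl⟩⟩

/-- `gl(∞)`: matrices indexed by half-integers with finitely many nonzero entries. -/
abbrev glM : Type := (HI × HI) →₀ ℂ

/-- The elementary matrix `E_{a,b}` of `gl(∞)`. -/
def EE (a b : HI) : glM := Finsupp.single (a, b) 1

/-- The product of `gl(∞)`: `E_{l1,l2} · E_{k1,k2} = δ_{l2+k1,0} E_{l1,k2}`. -/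
def glMul (x y : glM) : glM :=
  x.sum fun p c => y.sum fun r e =>
    if (p.2).1 + (r.1).1 = 0 then Finsupp.single (p.1, r.2) (c * e) else 0

/-!
Both algebras have bases of elementary matrices, and the map is a bijection between them: division
with remainder by `n` identifies `Fin n × ℤ` with `ℤ`, once for rows, `(i, l) ↦ l n + i`, and
once, with `i` reversed, for columns. Negation on `ℤ + 1/2` carries the row labelling to the
column labelling, so the contraction `δ_{b+c,0}` of `gl(∞)` becomes `δ_{j,i'} δ_{b+c,0}` on the
tensor side, which is multiplicativity on basis elements; bilinearity does the rest.
-/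

lemma hf_injective : Function.Injective hf := fun m m' h => by
  simpa [hf] using congrArg Subtype.val h

lemma hf_surjective : Function.Surjective hf := fun a => by
  obtain ⟨m, hm⟩ := a.2
  exact ⟨m, Subtype.ext hm.symm⟩

def halfIntEquiv : ℤ ≃ HI := Equiv.ofBijective hf ⟨hf_injective, hf_surjective⟩

@[simp]
lemma halfIntEquiv_apply (m : ℤ) : halfIntEquiv m = hf m := rfl

lemma hf_val_add_hf_val_eq_zero {m m' : ℤ} : (hf m).1 + (hf m').1 = 0 ↔ m + m' = -1 := by
  rw [show (hf m).1 + (hf m').1 = ((m + m' + 1 : ℤ) : ℚ) by simp only [hf]; push_cast; ring,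
    Int.cast_eq_zero]
  omega

def halfIntCongr {α : Type*} (e : α × ℤ ≃ ℤ) : α × HI ≃ HI :=
  ((Equiv.refl α).prodCongr halfIntEquiv.symm).trans (e.trans halfIntEquiv)

lemma halfIntCongr_hf {α : Type*} (e : α × ℤ ≃ ℤ) (i : α) (m : ℤ) :
    halfIntCongr e (i, hf m) = hf (e (i, m)) := by
  simp [halfIntCongr, ← halfIntEquiv_apply]

lemma glMul_EE (a b c d : HI) :
    glMul (EE a b) (EE c d) = if b.1 + c.1 = 0 then EE a d else 0 := by
  unfold glMul EE
  rw [Finsupp.sum_single_index, Finsupp.sum_single_index]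
  · simp
  · split <;> simp
  · simp

def glMulₗ : glM →ₗ[ℂ] glM →ₗ[ℂ] glM :=
  Finsupp.lsum ℂ fun p => LinearMap.toSpanSingleton ℂ (glM →ₗ[ℂ] glM) <|
    Finsupp.lsum ℂ fun r => LinearMap.toSpanSingleton ℂ glM <|
      if (p.2).1 + (r.1).1 = 0 then Finsupp.single (p.1, r.2) 1 else 0

lemma glMulₗ_apply (x y : glM) : glMulₗ x y = glMul x y := by
  simp only [glMulₗ, glMul, Finsupp.lsum_apply, LinearMap.finsupp_sum_apply,
    LinearMap.toSpanSingleton_apply, LinearMap.smul_apply, Finsupp.smul_sum]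
  refine Finsupp.sum_congr fun p _ => Finsupp.sum_congr fun r _ => ?_
  split_ifs <;> simp [mul_comm]

section MatrixTensor

variable (n : ℕ)

def matrixTensorBasis : Module.Basis ((Fin n × Fin n) × (HI × HI)) ℂ
    (Matrix (Fin n) (Fin n) ℂ ⊗[ℂ] glM) :=
  (Matrix.stdBasis ℂ (Fin n) (Fin n)).tensorProduct Finsupp.basisSingleOne

lemma matrixTensorBasis_apply (i j : Fin n) (a b : HI) :
    matrixTensorBasis n ((i, j), (a, b)) = Matrix.single i j 1 ⊗ₜ EE a b := by
  simp [matrixTensorBasis, Matrix.stdBasis_eq_single, EE]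

def tensorMul : (Matrix (Fin n) (Fin n) ℂ ⊗[ℂ] glM) →ₗ[ℂ] (Matrix (Fin n) (Fin n) ℂ ⊗[ℂ] glM) →ₗ[ℂ]
    (Matrix (Fin n) (Fin n) ℂ ⊗[ℂ] glM) :=
  TensorProduct.map₂ (LinearMap.mul ℂ _) glMulₗ

variable [NeZero n]

def rowEquiv : Fin n × ℤ ≃ ℤ := (Equiv.prodComm _ _).trans (Int.divModEquiv n).symm

def colEquiv : Fin n × ℤ ≃ ℤ := (Fin.revPerm.prodCongr (Equiv.refl ℤ)).trans (rowEquiv n)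

lemma rowEquiv_apply (i : Fin n) (l : ℤ) : rowEquiv n (i, l) = l * n + i := rfl

lemma colEquiv_apply (j : Fin n) (m : ℤ) : colEquiv n (j, m) = m * n + (n - 1 - j) := by
  have := j.2
  simp only [colEquiv, Equiv.trans_apply, Equiv.prodCongr_apply, Prod.map, Fin.revPerm_apply,
    Equiv.refl_apply, rowEquiv_apply, Fin.val_rev]
  omega

lemma colEquiv_add_rowEquiv_eq_neg_one (j i : Fin n) (k l : ℤ) :
    colEquiv n (j, k) + rowEquiv n (i, l) = -1 ↔ j = i ∧ k + l = -1 := by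
  -- `m ↦ -1 - m` is negation on `ℤ + 1/2`, and it turns row labels into column labels.
  have h : -1 - rowEquiv n (i, l) = colEquiv n (i, -1 - l) := by
    rw [rowEquiv_apply, colEquiv_apply]; ring
  rw [← eq_sub_iff_add_eq, h, (colEquiv n).injective.eq_iff, Prod.mk.injEq]
  omega

lemma halfIntCongr_col_add_row_eq_zero (j i : Fin n) (b c : HI) :
    (halfIntCongr (colEquiv n) (j, b)).1 + (halfIntCongr (rowEquiv n) (i, c)).1 = 0 ↔
      j = i ∧ b.1 + c.1 = 0 := by
  obtain ⟨k, rfl⟩ := hf_surjective b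
  obtain ⟨l, rfl⟩ := hf_surjective c
  rw [halfIntCongr_hf, halfIntCongr_hf, hf_val_add_hf_val_eq_zero, hf_val_add_hf_val_eq_zero,
    colEquiv_add_rowEquiv_eq_neg_one]

def glIndexEquiv : (Fin n × Fin n) × (HI × HI) ≃ HI × HI :=
  (Equiv.prodProdProdComm _ _ _ _).trans
    ((halfIntCongr (rowEquiv n)).prodCongr (halfIntCongr (colEquiv n)))

def matrixTensorGlEquiv : Matrix (Fin n) (Fin n) ℂ ⊗[ℂ] glM ≃ₗ[ℂ] glM :=
  (matrixTensorBasis n).equiv Finsupp.basisSingleOne (glIndexEquiv n)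

lemma matrixTensorGlEquiv_single_tmul_EE (i j : Fin n) (a b : HI) :
    matrixTensorGlEquiv n (Matrix.single i j 1 ⊗ₜ EE a b) =
      EE (halfIntCongr (rowEquiv n) (i, a)) (halfIntCongr (colEquiv n) (j, b)) := by
  rw [← matrixTensorBasis_apply, matrixTensorGlEquiv, Module.Basis.equiv_apply]
  simp [glIndexEquiv, EE]

lemma matrixTensorGlEquiv_mul_basis (i j i' j' : Fin n) (a b c d : HI) :
    matrixTensorGlEquiv n ((Matrix.single i j 1 * Matrix.single i' j' 1) ⊗ₜ glMul (EE a b) (EE c d))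
      = glMul (matrixTensorGlEquiv n (Matrix.single i j 1 ⊗ₜ EE a b))
          (matrixTensorGlEquiv n (Matrix.single i' j' 1 ⊗ₜ EE c d)) := by
  rw [matrixTensorGlEquiv_single_tmul_EE, matrixTensorGlEquiv_single_tmul_EE, glMul_EE, glMul_EE]
  simp only [halfIntCongr_col_add_row_eq_zero]
  by_cases hji : j = i'
  · subst hji
    by_cases hbc : b.1 + c.1 = 0
    · rw [if_pos hbc, if_pos ⟨rfl, hbc⟩, Matrix.single_mul_single_same, one_mul,
        matrixTensorGlEquiv_single_tmul_EE]
    · rw [if_neg hbc, if_neg fun h => hbc h.2, TensorProduct.tmul_zero, map_zero]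
  · rw [Matrix.single_mul_single_of_ne (h := hji), TensorProduct.zero_tmul, map_zero,
      if_neg fun h => hji h.1]

lemma matrixTensorGlEquiv_tensorMul (u v : Matrix (Fin n) (Fin n) ℂ ⊗[ℂ] glM) :
    matrixTensorGlEquiv n (tensorMul n u v) =
      glMul (matrixTensorGlEquiv n u) (matrixTensorGlEquiv n v) := by
  simp only [← glMulₗ_apply]
  suffices h : (tensorMul n).compr₂ (matrixTensorGlEquiv n).toLinearMap =
      (glMulₗ ∘ₗ (matrixTensorGlEquiv n).toLinearMap).compl₂
        (matrixTensorGlEquiv n).toLinearMap from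
    LinearMap.congr_fun₂ h u v
  refine LinearMap.ext_basis (matrixTensorBasis n) (matrixTensorBasis n) ?_
  rintro ⟨⟨i, j⟩, ⟨a, b⟩⟩ ⟨⟨i', j'⟩, ⟨c, d⟩⟩
  simpa [matrixTensorBasis_apply, tensorMul, glMulₗ_apply] using
    matrixTensorGlEquiv_mul_basis n i j i' j' a b c d

end MatrixTensor

/-- (3.2)/(3.11): `M_n(ℂ) ⊗ gl(∞) ≅ gl(∞)` as associative algebras, via the linear
equivalence sending `E_{i,j} ⊗ E_{l+1/2,k-1/2}` to `E_{ln+i-1/2, kn-j+1/2}` for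
`i, j ∈ {1,…,n}` and `l, k ∈ ℤ`. -/
theorem matrix_tensor_glInfinity_iso (n : ℕ) (hn : 0 < n) :
    ∃ Φ : (Matrix (Fin n) (Fin n) ℂ) ⊗[ℂ] glM ≃ₗ[ℂ] glM,
      (∀ (i j : Fin n) (l k : ℤ),
        Φ (Matrix.single i j (1 : ℂ) ⊗ₜ[ℂ] EE (hf l) (hf (k - 1)))
          = EE (hf (l * n + (i : ℕ))) (hf (k * n - (j : ℕ) - 1))) ∧
      (∀ (A B : Matrix (Fin n) (Fin n) ℂ) (x y : glM),
        Φ ((A * B) ⊗ₜ[ℂ] glMul x y) = glMul (Φ (A ⊗ₜ[ℂ] x)) (Φ (B ⊗ₜ[ℂ] y))) := by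
  have : NeZero n := ⟨hn.ne'⟩
  refine ⟨matrixTensorGlEquiv n, fun i j l k => ?_, fun A B x y => ?_⟩
  · rw [matrixTensorGlEquiv_single_tmul_EE, halfIntCongr_hf, halfIntCongr_hf, rowEquiv_apply,
      colEquiv_apply]
    congr 2
    ring
  · simpa [tensorMul, glMulₗ_apply] using matrixTensorGlEquiv_tensorMul n (A ⊗ₜ x) (B ⊗ₜ y)
end
end
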